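/- arXiv:1110.0288 — 4 statements merged into one kernel-verified Lean document; each statement's English description precedes it below -/
import Mathlib

section
/- Let h, z : ℝ → ℝ be differentiable with h(x) > 0, and suppose the steady frictionless shallow water momentum equation holds: d/dx(q₀²/h + g h²/2) = -g h z'(x) for a constant discharge q₀. Then the Bernoulli quantity E(x) = q₀²/(2 g h(x)²) + h(x) + z(x) is constant. -/
/-!
Writing the momentum flux `M(d) = q₀²/d + g d²/2` and the specific energy
`S(d) = q₀²/(2 g d²) + d` as functions of the depth, one has `M'(d) = g d · S'(d)`.
Along the flow the momentum equation therefore reads `g h · (S ∘ h)' = -g h z'`, and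
dividing by `g h > 0` gives `(S ∘ h + z)' = 0`, so the Bernoulli quantity is constant.
-/

namespace ShallowWater

noncomputable def momentumFlux (g q₀ d : ℝ) : ℝ := q₀ ^ 2 / d + g * d ^ 2 / 2

noncomputable def specificEnergy (g q₀ d : ℝ) : ℝ := q₀ ^ 2 / (2 * g * d ^ 2) + d

variable {g q₀ d : ℝ}

theorem hasDerivAt_momentumFlux (hd : d ≠ 0) :
    HasDerivAt (momentumFlux g q₀) (g * d - q₀ ^ 2 / d ^ 2) d :=
  (((hasDerivAt_const d (q₀ ^ 2)).div (hasDerivAt_id' d) hd).add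
    (((hasDerivAt_pow 2 d).const_mul g).div_const 2)).congr_deriv (by field_simp; ring)

theorem hasDerivAt_specificEnergy (hg : g ≠ 0) (hd : d ≠ 0) :
    HasDerivAt (specificEnergy g q₀) ((g * d - q₀ ^ 2 / d ^ 2) / (g * d)) d :=
  (((hasDerivAt_const d (q₀ ^ 2)).div ((hasDerivAt_pow 2 d).const_mul (2 * g))
    (by positivity)).add (hasDerivAt_id' d)).congr_deriv (by field_simp; ring)

theorem hasDerivAt_specificEnergy_comp_add_zero (hg : g ≠ 0) {h z : ℝ → ℝ} {x : ℝ}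
    (hx : h x ≠ 0) (hh : DifferentiableAt ℝ h x) (hz : DifferentiableAt ℝ z x)
    (hmom : HasDerivAt (fun x => momentumFlux g q₀ (h x)) (-(g * h x * deriv z x)) x) :
    HasDerivAt (fun x => ShallowWater.specificEnergy g q₀ (h x) + z x) 0 x := by
  have hM := (hasDerivAt_momentumFlux (g := g) (q₀ := q₀) hx).comp x hh.hasDerivAt
  have hS := (hasDerivAt_specificEnergy (q₀ := q₀) hg hx).comp x hh.hasDerivAt
  have hflux : (g * h x - q₀ ^ 2 / h x ^ 2) * deriv h x = -(g * h x * deriv z x) :=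
    hM.unique hmom
  refine (hS.add hz.hasDerivAt).congr_deriv ?_
  rw [div_mul_eq_mul_div, hflux]
  field_simp
  ring

end ShallowWater

/-- If the steady frictionless shallow water momentum equation
`d/dx (q₀²/h + g h²/2) = - g h z'` holds with `h > 0`, then the Bernoulli
quantity `E = q₀²/(2 g h²) + h + z` is constant. -/
theorem bernoulli_constant
    (g q₀ : ℝ) (hg : 0 < g) (h z : ℝ → ℝ)
    (hpos : ∀ x, 0 < h x)
    (hdiff : Differentiable ℝ h) (zdiff : Differentiable ℝ z)
    (hmom : ∀ x, HasDerivAt (fun x => q₀ ^ 2 / h x + g * (h x) ^ 2 / 2)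
      (-(g * h x * deriv z x)) x) :
    ∀ x y, q₀ ^ 2 / (2 * g * (h x) ^ 2) + h x + z x
         = q₀ ^ 2 / (2 * g * (h y) ^ 2) + h y + z y := by
  have hE : ∀ x, HasDerivAt (fun x => ShallowWater.specificEnergy g q₀ (h x) + z x) 0 x :=
    fun x => ShallowWater.hasDerivAt_specificEnergy_comp_add_zero hg.ne' (hpos x).ne'
      (hdiff x) (zdiff x) (hmom x)
  exact is_const_of_deriv_eq_zero (fun x => (hE x).differentiableAt) (fun x => (hE x).deriv)
end

section
/- In the Stoker dam-break solution, the middle-state speed c_m = √(g h_m) satisfies the polynomial equation −8 g h_r c_m² (g h_l − c_m²)² + (c_m² − g h_r)² (c_m² + g h_r) = 0, and for 0 < h_r < h_l this equation has a solution c_m with √(g h_r) < c_m < √(g h_l). -/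
open Set

namespace Stoker

/-- The Stoker polynomial with `a = g h_r` and `b = g h_l`. -/
def middleStatePoly (a b c : ℝ) : ℝ :=
  -8 * a * c ^ 2 * (b - c ^ 2) ^ 2 + (c ^ 2 - a) ^ 2 * (c ^ 2 + a)

variable {a b : ℝ}

theorem continuous_middleStatePoly : Continuous (middleStatePoly a b) := by
  unfold middleStatePoly
  fun_prop

theorem middleStatePoly_sqrt_left (ha : 0 ≤ a) :
    middleStatePoly a b (√a) = -8 * a ^ 2 * (b - a) ^ 2 := by
  rw [middleStatePoly, Real.sq_sqrt ha]
  ring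

theorem middleStatePoly_sqrt_right (hb : 0 ≤ b) :
    middleStatePoly a b (√b) = (b - a) ^ 2 * (b + a) := by
  rw [middleStatePoly, Real.sq_sqrt hb]
  ring

theorem exists_middleStatePoly_eq_zero (ha : 0 < a) (hab : a < b) :
    ∃ c ∈ Ioo (√a) (√b), middleStatePoly a b c = 0 := by
  have hba : 0 < (b - a) ^ 2 := pow_pos (sub_pos.mpr hab) 2
  have h_left : middleStatePoly a b (√a) < 0 := by
    rw [middleStatePoly_sqrt_left ha.le]
    linarith [mul_pos (pow_pos ha 2) hba]
  have h_right : 0 < middleStatePoly a b (√b) := by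
    rw [middleStatePoly_sqrt_right (ha.trans hab).le]
    exact mul_pos hba (by linarith)
  exact intermediate_value_Ioo (Real.sqrt_le_sqrt hab.le)
    continuous_middleStatePoly.continuousOn ⟨h_left, h_right⟩

end Stoker

/-- Existence of the Stoker middle-state speed: for `0 < h_r < h_l` the
polynomial `P(c) = -8 g h_r c² (g h_l - c²)² + (c² - g h_r)² (c² + g h_r)`
has a root `c_m` with `√(g h_r) < c_m < √(g h_l)`. -/
theorem stoker_middle_state_exists
    (g hr hl : ℝ) (hg : 0 < g) (hhr : 0 < hr) (hrl : hr < hl) :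
    ∃ cm : ℝ, Real.sqrt (g * hr) < cm ∧ cm < Real.sqrt (g * hl) ∧
      -8 * g * hr * cm ^ 2 * (g * hl - cm ^ 2) ^ 2 +
        (cm ^ 2 - g * hr) ^ 2 * (cm ^ 2 + g * hr) = 0 := by
  obtain ⟨cm, ⟨h_lower, h_upper⟩, h_root⟩ :=
    Stoker.exists_middleStatePoly_eq_zero (mul_pos hg hhr) (mul_lt_mul_of_pos_left hrl hg)
  refine ⟨cm, h_lower, h_upper, ?_⟩
  rw [Stoker.middleStatePoly] at h_root
  linear_combination h_root
end

section
/- The 1D Thacker oscillating solution — with topography z(x) = h₀((x − L/2)²/a² − 1), free surface η(t,x) = z(x) + h(t,x) satisfying h(t,x) = −h₀(((x−L/2)/a + (B/√(2 g h₀)) cos(ωt))² − 1) and velocity u(t) = B sin(ωt) where ω = √(2 g h₀)/a — satisfies the 1D shallow water equations ∂ₜh + ∂ₓ(hu) = 0 and ∂ₜu + u ∂ₓu + g ∂ₓ(h + z) = 0 wherever h > 0. -/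
/-!
The Thacker depth `h = -h₀ (X² - 1)` with `X = (x - x₀)/a + c cos ωt` is a quadratic in `x` whose
vertex moves rigidly, while the velocity `u = B sin ωt` is uniform in space. Hence `∂ₓ(h u) = u ∂ₓh`
and `∂ₜh + u ∂ₓh = 2 h₀ X sin ωt (c ω - B/a)`, and in `∂ₓ(h + z)` the quadratic terms of depth and
bowl cancel, leaving `u' + g ∂ₓ(h + z) = (B ω - 2 g h₀ c/a) cos ωt`. Both equations therefore reduce
to the two parameter relations `c ω = B/a` and `B ω = 2 g h₀ c/a`, which hold for the stated
`B`, `ω` and `c = B/√(2 g h₀)` because `√(2 g h₀)² = 2 g h₀`.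
-/

open Real

namespace Thacker

theorem hasDerivAt_depth_time (h₀ a x₀ c ω x t : ℝ) :
    HasDerivAt (fun τ => -h₀ * (((x - x₀) / a + c * cos (ω * τ)) ^ 2 - 1))
      (2 * h₀ * c * ω * ((x - x₀) / a + c * cos (ω * t)) * sin (ω * t)) t := by
  have hcos : HasDerivAt (fun τ => cos (ω * τ)) (-sin (ω * t) * ω) t := by
    simpa [mul_comm] using ((hasDerivAt_id t).const_mul ω).cos
  refine ((((hcos.const_mul c).const_add ((x - x₀) / a)).fun_pow 2).sub_const 1
    |>.const_mul (-h₀)).congr_deriv ?_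
  norm_num
  ring

theorem hasDerivAt_depth_space (h₀ a x₀ c ω t x : ℝ) :
    HasDerivAt (fun ξ => -h₀ * (((ξ - x₀) / a + c * cos (ω * t)) ^ 2 - 1))
      (-2 * h₀ / a * ((x - x₀) / a + c * cos (ω * t))) x := by
  refine (((((hasDerivAt_id' x).sub_const x₀).div_const a).add_const (c * cos (ω * t))).fun_pow 2
    |>.sub_const 1 |>.const_mul (-h₀)).congr_deriv ?_
  norm_num
  ring

theorem hasDerivAt_bowl (h₀ a x₀ x : ℝ) :
    HasDerivAt (fun ξ => h₀ * ((ξ - x₀) ^ 2 / a ^ 2 - 1)) (2 * h₀ * (x - x₀) / a ^ 2) x := by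
  refine ((((hasDerivAt_id' x).sub_const x₀).fun_pow 2).div_const (a ^ 2) |>.sub_const 1
    |>.const_mul h₀).congr_deriv ?_
  norm_num
  ring

theorem hasDerivAt_velocity (B ω t : ℝ) :
    HasDerivAt (fun τ => B * sin (ω * τ)) (B * ω * cos (ω * t)) t :=
  ((((hasDerivAt_id' t).const_mul ω).sin).const_mul B).congr_deriv (by ring)

variable {h₀ a x₀ c ω B : ℝ}

theorem mass_conservation (hrel : c * ω = B / a) {h : ℝ → ℝ → ℝ}
    (hh : ∀ t x, h t x = -h₀ * (((x - x₀) / a + c * cos (ω * t)) ^ 2 - 1))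
    {u : ℝ → ℝ} (hu : ∀ t, u t = B * sin (ω * t)) (t x : ℝ) :
    deriv (fun τ => h τ x) t + deriv (fun ξ => h t ξ * u t) x = 0 := by
  simp only [hh, hu]
  rw [(hasDerivAt_depth_time h₀ a x₀ c ω x t).deriv,
    ((hasDerivAt_depth_space h₀ a x₀ c ω t x).mul_const _).deriv]
  linear_combination 2 * h₀ * ((x - x₀) / a + c * cos (ω * t)) * sin (ω * t) * hrel

theorem momentum_balance (g : ℝ) (hrel : B * ω = 2 * g * h₀ * c / a) {h : ℝ → ℝ → ℝ}
    (hh : ∀ t x, h t x = -h₀ * (((x - x₀) / a + c * cos (ω * t)) ^ 2 - 1))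
    {z : ℝ → ℝ} (hz : ∀ x, z x = h₀ * ((x - x₀) ^ 2 / a ^ 2 - 1))
    {u : ℝ → ℝ} (hu : ∀ t, u t = B * sin (ω * t)) (t x : ℝ) :
    deriv u t + u t * deriv (fun _ : ℝ => u t) x + g * deriv (fun ξ => h t ξ + z ξ) x = 0 := by
  simp only [hh, hz, funext hu, deriv_const, mul_zero, add_zero]
  rw [(hasDerivAt_velocity B ω t).deriv,
    ((hasDerivAt_depth_space h₀ a x₀ c ω t x).fun_add (hasDerivAt_bowl h₀ a x₀ x)).deriv]
  linear_combination cos (ω * t) * hrel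

end Thacker

/-- The 1D Thacker oscillating planar solution in a parabolic bowl satisfies
the nonconservative 1D shallow water equations wherever `h > 0`. -/
theorem thacker_1d_solves_shallow_water
    (g h₀ a L : ℝ) (hg : 0 < g) (hh₀ : 0 < h₀) (ha : 0 < a)
    (B ω : ℝ)
    (hB : B = Real.sqrt (2 * g * h₀) / (2 * a))
    (hω : ω = Real.sqrt (2 * g * h₀) / a)
    (z : ℝ → ℝ) (hz : ∀ x, z x = h₀ * ((x - L / 2) ^ 2 / a ^ 2 - 1))
    (h : ℝ → ℝ → ℝ)
    (hh : ∀ t x, h t x = -h₀ *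
        (((x - L / 2) / a + B / Real.sqrt (2 * g * h₀) * Real.cos (ω * t)) ^ 2 - 1))
    (u : ℝ → ℝ) (hu : ∀ t, u t = B * Real.sin (ω * t)) :
    ∀ t x : ℝ, 0 < h t x →
      deriv (fun τ => h τ x) t + deriv (fun ξ => h t ξ * u t) x = 0 ∧
      deriv u t + u t * deriv (fun _ : ℝ => u t) x +
        g * deriv (fun ξ => h t ξ + z ξ) x = 0 := by
  intro t x _
  set s := √(2 * g * h₀)
  have hs : s ^ 2 = 2 * g * h₀ := sq_sqrt (by positivity)
  have hs₀ : s ≠ 0 := (sqrt_pos.mpr (by positivity)).ne'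
  have ha₀ : a ≠ 0 := ha.ne'
  refine ⟨Thacker.mass_conservation ?_ hh hu t x, Thacker.momentum_balance g ?_ hh hz hu t x⟩
  · rw [hB, hω]
    field_simp
  · rw [hB, hω]
    field_simp
    linear_combination hs
end

section
/- The 2D Thacker planar surface in a paraboloid — topography z(x,y) = −h₀(1 − r²/a²) with r² = (x−L/2)² + (y−L/2)², height h(x,y,t) = (η h₀/a²)(2(x−L/2)cos(ωt) + 2(y−L/2)sin(ωt) − η) − z(x,y), velocities u(t) = −η ω sin(ωt), v(t) = η ω cos(ωt), ω = √(2 g h₀)/a — satisfies the 2D shallow water equations ∂ₜh + ∂ₓ(hu) + ∂_y(hv) = 0, ∂ₜu + u∂ₓu + v∂_yu + g∂ₓ(h+z) = 0, ∂ₜv + u∂ₓv + v∂_yv + g∂_y(h+z) = 0 wherever h > 0. -/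
/-!
The free surface `h + z` is a plane whose slope `(2ηh₀/a²)(cos ωt, sin ωt)` rotates with the
flow, so the pressure force `g ∇(h + z)` equals `ηω² (cos ωt, sin ωt) = -(u', v')` exactly
because `ω² = 2gh₀/a²`. Since the velocity is uniform in space, the mass equation reduces to
transport `∂ₜh + u ∂ₓh + v ∂_y h = 0`: the velocity is orthogonal to the slope of the plane,
and its component along `∇z` cancels the time derivative of the surface.
-/

open Real

lemma hasDerivAt_sin_const_mul (ω t : ℝ) :
    HasDerivAt (fun τ => sin (ω * τ)) (ω * cos (ω * t)) t := by
  simpa [mul_comm] using ((hasDerivAt_const_mul ω).sin : HasDerivAt (fun τ => sin (ω * τ)) _ t)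

lemma hasDerivAt_cos_const_mul (ω t : ℝ) :
    HasDerivAt (fun τ => cos (ω * τ)) (-ω * sin (ω * t)) t := by
  simpa [mul_comm] using ((hasDerivAt_const_mul ω).cos : HasDerivAt (fun τ => cos (ω * τ)) _ t)

section ThackerFields

variable (η h₀ a L ω : ℝ)

noncomputable def paraboloidBottom (x y : ℝ) : ℝ :=
  -h₀ * (1 - ((x - L / 2) ^ 2 + (y - L / 2) ^ 2) / a ^ 2)

noncomputable def thackerSurface (t x y : ℝ) : ℝ :=
  η * h₀ / a ^ 2 * (2 * (x - L / 2) * cos (ω * t) + 2 * (y - L / 2) * sin (ω * t) - η)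

variable {η h₀ a L ω}

lemma hasDerivAt_paraboloidBottom_fst (x y : ℝ) :
    HasDerivAt (paraboloidBottom h₀ a L · y) (2 * h₀ * (x - L / 2) / a ^ 2) x :=
  ((((hasDerivAt_id' x).sub_const (L / 2)).fun_pow 2).add_const ((y - L / 2) ^ 2)).div_const
    (a ^ 2) |>.const_sub 1 |>.const_mul (-h₀) |>.congr_deriv (by ring)

lemma hasDerivAt_paraboloidBottom_snd (x y : ℝ) :
    HasDerivAt (paraboloidBottom h₀ a L x ·) (2 * h₀ * (y - L / 2) / a ^ 2) y :=
  ((((hasDerivAt_id' y).sub_const (L / 2)).fun_pow 2).const_add ((x - L / 2) ^ 2)).div_const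
    (a ^ 2) |>.const_sub 1 |>.const_mul (-h₀) |>.congr_deriv (by ring)

lemma hasDerivAt_thackerSurface_time (t x y : ℝ) :
    HasDerivAt (thackerSurface η h₀ a L ω · x y)
      (2 * η * h₀ * ω / a ^ 2 * ((y - L / 2) * cos (ω * t) - (x - L / 2) * sin (ω * t))) t :=
  (((hasDerivAt_cos_const_mul ω t).const_mul (2 * (x - L / 2))).add
    ((hasDerivAt_sin_const_mul ω t).const_mul (2 * (y - L / 2)))).sub_const η
    |>.const_mul (η * h₀ / a ^ 2) |>.congr_deriv (by ring)

lemma hasDerivAt_thackerSurface_fst (t x y : ℝ) :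
    HasDerivAt (thackerSurface η h₀ a L ω t · y) (2 * η * h₀ / a ^ 2 * cos (ω * t)) x :=
  ((((hasDerivAt_id' x).sub_const (L / 2)).const_mul 2).mul_const (cos (ω * t))).add_const
    (2 * (y - L / 2) * sin (ω * t)) |>.sub_const η |>.const_mul (η * h₀ / a ^ 2)
    |>.congr_deriv (by ring)

lemma hasDerivAt_thackerSurface_snd (t x y : ℝ) :
    HasDerivAt (thackerSurface η h₀ a L ω t x ·) (2 * η * h₀ / a ^ 2 * sin (ω * t)) y :=
  ((((hasDerivAt_id' y).sub_const (L / 2)).const_mul 2).mul_const (sin (ω * t))).const_add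
    (2 * (x - L / 2) * cos (ω * t)) |>.sub_const η |>.const_mul (η * h₀ / a ^ 2)
    |>.congr_deriv (by ring)

end ThackerFields

theorem thacker_2d_planar_solves_shallow_water_general
    (g h₀ a η L : ℝ) (hg : 0 < g) (hh₀ : 0 < h₀)
    (ω : ℝ) (hω : ω = Real.sqrt (2 * g * h₀) / a)
    (z : ℝ → ℝ → ℝ)
    (hz : ∀ x y, z x y = -h₀ * (1 - ((x - L / 2) ^ 2 + (y - L / 2) ^ 2) / a ^ 2))
    (h : ℝ → ℝ → ℝ → ℝ)
    (hh : ∀ t x y, h t x y = η * h₀ / a ^ 2 *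
        (2 * (x - L / 2) * Real.cos (ω * t) + 2 * (y - L / 2) * Real.sin (ω * t) - η)
        - z x y)
    (u v : ℝ → ℝ)
    (hu : ∀ t, u t = -η * ω * Real.sin (ω * t))
    (hv : ∀ t, v t = η * ω * Real.cos (ω * t)) :
    ∀ t x y : ℝ, 0 < h t x y →
      deriv (fun τ => h τ x y) t + deriv (fun ξ => h t ξ y * u t) x +
        deriv (fun ζ => h t x ζ * v t) y = 0 ∧
      deriv u t + u t * deriv (fun _ : ℝ => u t) x + v t * deriv (fun _ : ℝ => u t) y +
        g * deriv (fun ξ => h t ξ y + z ξ y) x = 0 ∧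
      deriv v t + u t * deriv (fun _ : ℝ => v t) x + v t * deriv (fun _ : ℝ => v t) y +
        g * deriv (fun ζ => h t x ζ + z x ζ) y = 0 := by
  obtain rfl : z = paraboloidBottom h₀ a L := funext₂ hz
  obtain rfl : h = fun t x y => thackerSurface η h₀ a L ω t x y - paraboloidBottom h₀ a L x y :=
    funext₃ hh
  have hω_sq : ω ^ 2 = 2 * g * h₀ / a ^ 2 := by
    rw [hω, div_pow, sq_sqrt (by positivity)]
  intro t x y _
  simp only [sub_add_cancel, deriv_mul_const_field, deriv_const, mul_zero, add_zero]
  obtain rfl : u = fun t => -η * ω * sin (ω * t) := funext hu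
  obtain rfl : v = fun t => η * ω * cos (ω * t) := funext hv
  rw [(hasDerivAt_thackerSurface_time t x y |>.sub_const _).deriv,
    (hasDerivAt_thackerSurface_fst t x y |>.fun_sub (hasDerivAt_paraboloidBottom_fst x y)).deriv,
    (hasDerivAt_thackerSurface_snd t x y |>.fun_sub (hasDerivAt_paraboloidBottom_snd x y)).deriv,
    (hasDerivAt_thackerSurface_fst t x y).deriv, (hasDerivAt_thackerSurface_snd t x y).deriv,
    (hasDerivAt_sin_const_mul ω t |>.const_mul _).deriv,
    (hasDerivAt_cos_const_mul ω t |>.const_mul _).deriv]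
  refine ⟨by ring, ?_, ?_⟩
  · linear_combination (-η * cos (ω * t)) * hω_sq
  · linear_combination (-η * sin (ω * t)) * hω_sq

/-- The 2D Thacker planar surface in a paraboloid satisfies the
nonconservative 2D shallow water equations with topography wherever `h > 0`. -/
theorem thacker_2d_planar_solves_shallow_water
    (g h₀ a η L : ℝ) (hg : 0 < g) (hh₀ : 0 < h₀) (ha : 0 < a)
    (ω : ℝ) (hω : ω = Real.sqrt (2 * g * h₀) / a)
    (z : ℝ → ℝ → ℝ)
    (hz : ∀ x y, z x y = -h₀ * (1 - ((x - L / 2) ^ 2 + (y - L / 2) ^ 2) / a ^ 2))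
    (h : ℝ → ℝ → ℝ → ℝ)
    (hh : ∀ t x y, h t x y = η * h₀ / a ^ 2 *
        (2 * (x - L / 2) * Real.cos (ω * t) + 2 * (y - L / 2) * Real.sin (ω * t) - η)
        - z x y)
    (u v : ℝ → ℝ)
    (hu : ∀ t, u t = -η * ω * Real.sin (ω * t))
    (hv : ∀ t, v t = η * ω * Real.cos (ω * t)) :
    ∀ t x y : ℝ, 0 < h t x y →
      deriv (fun τ => h τ x y) t + deriv (fun ξ => h t ξ y * u t) x +
        deriv (fun ζ => h t x ζ * v t) y = 0 ∧
      deriv u t + u t * deriv (fun _ : ℝ => u t) x + v t * deriv (fun _ : ℝ => u t) y +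
        g * deriv (fun ξ => h t ξ y + z ξ y) x = 0 ∧
      deriv v t + u t * deriv (fun _ : ℝ => v t) x + v t * deriv (fun _ : ℝ => v t) y +
        g * deriv (fun ζ => h t x ζ + z x ζ) y = 0 :=
  thacker_2d_planar_solves_shallow_water_general g h₀ a η L hg hh₀ ω hω z hz h hh u v hu hv
end
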